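/- Let β > 0. There exists a constant C (depending only on β) such that for every v ∈ ℝ³, ∫_{ℝ³} ∫_{𝕊²} ⟨v − v₂, ω⟩_+ M_β(v₂) exp( (β/4) |v'|² ) dω dv₂ ≤ C · exp( (β/4) |v|² ) / (1 + |v|), where v' := v − ⟨v − v₂, ω⟩ω. -/

import Mathlib

open scoped RealInnerProductSpace
open MeasureTheory

/-- The Maxwellian equilibrium distribution `M_β` on `ℝ³`. -/
noncomputable def Maxwellian3 (β : ℝ) (v : EuclideanSpace ℝ (Fin 3)) : ℝ :=
  (β / (2 * Real.pi)) ^ ((3 : ℝ) / 2) * Real.exp (-(β / 2) * ‖v‖ ^ 2)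

/-!
With `u = ⟨v, ω⟩` and `w = ⟨v₂, ω⟩` one has `|v'|² = |v|² - u² + w²` and `w² ≤ |v₂|²`, so the
integrand is at most `e^{(β/4)|v|²}` times `(|u| + |v₂|) e^{-(β/4)(u² + |v₂|²)}`, which is in turn
bounded by a constant times the product `e^{-(β/8)|v₂|²} e^{-(β/8)⟨v, ω⟩²}`. The first factor is
integrable in `v₂`. The decay `1/(1 + |v|)` comes from the second: in polar coordinates its
integral over the sphere is a multiple of its integral over the unit ball, and in an orthonormal
basis whose first vector is `v/|v|` the unit ball lies in a slab of the form `ℝ × [-1, 1]²`, on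
which the integral is a one-dimensional Gaussian integral of size `√π / (√(β/8) |v|)`.
-/

open Real Metric Set Module

theorem mul_exp_neg_mul_sq_le {c : ℝ} (hc : 0 < c) (s : ℝ) :
    s * exp (-(c * s ^ 2)) ≤ √c⁻¹ := by
  rcases le_or_gt s 0 with hs | hs
  · exact (mul_nonpos_of_nonpos_of_nonneg hs (exp_pos _).le).trans (sqrt_nonneg _)
  refine le_sqrt_of_sq_le ?_
  have hlin : c * s ^ 2 ≤ exp (c * s ^ 2) := by linarith [add_one_le_exp (c * s ^ 2)]
  calc (s * exp (-(c * s ^ 2))) ^ 2 = c⁻¹ * (c * s ^ 2) * exp (-(c * s ^ 2)) ^ 2 := by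
        field_simp
    _ ≤ c⁻¹ * exp (c * s ^ 2) * exp (-(c * s ^ 2)) ^ 2 := by gcongr
    _ = c⁻¹ * exp (-(c * s ^ 2)) := by
        rw [mul_assoc, sq (exp _), ← mul_assoc (exp _), ← exp_add]; simp
    _ ≤ c⁻¹ := mul_le_of_le_one_right (by positivity) (exp_le_one_iff.2 (by nlinarith [sq_nonneg s]))

theorem add_mul_exp_neg_mul_sq_add_sq_le {a x y : ℝ} (ha : 0 < a) :
    (x + y) * exp (-(a * (x ^ 2 + y ^ 2)))
      ≤ 2 * √(2 / a) * (exp (-(a / 2 * x ^ 2)) * exp (-(a / 2 * y ^ 2))) := by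
  have half (s : ℝ) : s * exp (-(a * s ^ 2)) ≤ √(2 / a) * exp (-(a / 2 * s ^ 2)) := by
    have h := mul_exp_neg_mul_sq_le (half_pos ha) s
    rw [inv_div] at h
    calc s * exp (-(a * s ^ 2)) = s * exp (-(a / 2 * s ^ 2)) * exp (-(a / 2 * s ^ 2)) := by
          rw [mul_assoc, ← exp_add]; ring_nf
      _ ≤ √(2 / a) * exp (-(a / 2 * s ^ 2)) := by gcongr
  have decay (s : ℝ) : exp (-(a * s ^ 2)) ≤ exp (-(a / 2 * s ^ 2)) :=
    exp_le_exp.2 (by nlinarith [sq_nonneg s])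
  have hsplit : (x + y) * exp (-(a * (x ^ 2 + y ^ 2))) = x * exp (-(a * x ^ 2)) * exp (-(a * y ^ 2))
      + y * exp (-(a * y ^ 2)) * exp (-(a * x ^ 2)) := by
    rw [mul_assoc, mul_assoc, ← exp_add, ← exp_add]; ring_nf
  rw [hsplit]
  have hx := mul_le_mul (half x) (decay y) (exp_pos _).le (by positivity)
  have hy := mul_le_mul (half y) (decay x) (exp_pos _).le (by positivity)
  linarith

theorem max_sub_mul_exp_collision_le {a r w : ℝ} (ha : 0 < a) (hw : |w| ≤ r) (s u : ℝ) :
    max (u - w) 0 * exp (-(2 * a * r ^ 2)) * exp (a * (s - u ^ 2 + w ^ 2))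
      ≤ 2 * √(2 / a) * exp (a * s) * (exp (-(a / 2 * u ^ 2)) * exp (-(a / 2 * r ^ 2))) := by
  have hr : 0 ≤ r := (abs_nonneg w).trans hw
  have hmax : max (u - w) 0 ≤ |u| + r :=
    max_le (by linarith [le_abs_self u, neg_abs_le w]) (by positivity)
  have hexp : exp (-(2 * a * r ^ 2)) * exp (a * (s - u ^ 2 + w ^ 2))
      ≤ exp (a * s) * exp (-(a * (|u| ^ 2 + r ^ 2))) := by
    have : w ^ 2 ≤ r ^ 2 := by rw [← sq_abs]; exact pow_le_pow_left₀ (abs_nonneg w) hw 2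
    rw [← exp_add, ← exp_add, sq_abs]
    exact exp_le_exp.2 (by nlinarith)
  calc max (u - w) 0 * exp (-(2 * a * r ^ 2)) * exp (a * (s - u ^ 2 + w ^ 2))
      ≤ (|u| + r) * (exp (a * s) * exp (-(a * (|u| ^ 2 + r ^ 2)))) := by
        rw [mul_assoc]; gcongr
    _ = exp (a * s) * ((|u| + r) * exp (-(a * (|u| ^ 2 + r ^ 2)))) := by ring
    _ ≤ exp (a * s) * (2 * √(2 / a) * (exp (-(a / 2 * |u| ^ 2)) * exp (-(a / 2 * r ^ 2)))) :=
        mul_le_mul_of_nonneg_left (add_mul_exp_neg_mul_sq_add_sq_le ha) (exp_pos _).le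
    _ = _ := by rw [sq_abs]; ring

theorem norm_exp_neg_mul_sq_le_one {b : ℝ} (hb : 0 ≤ b) (t : ℝ) : ‖exp (-(b * t ^ 2))‖ ≤ 1 := by
  rw [norm_of_nonneg (exp_pos _).le, exp_le_one_iff, neg_nonpos]; positivity

theorem integral_integral_le_of_le_mul {α β : Type*} [MeasurableSpace α] [MeasurableSpace β]
    {μ : Measure α} {ν : Measure β} {f : α → β → ℝ} {g : α → ℝ} {h : β → ℝ}
    (hf : ∀ x y, 0 ≤ f x y) (hfgh : ∀ x y, f x y ≤ g x * h y) (hg : Integrable g μ)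
    (hh : Integrable h ν) :
    ∫ x, ∫ y, f x y ∂ν ∂μ ≤ (∫ x, g x ∂μ) * ∫ y, h y ∂ν := by
  have hinner (x : α) : ∫ y, f x y ∂ν ≤ g x * ∫ y, h y ∂ν :=
    (integral_mono_of_nonneg (.of_forall (hf x)) (hh.const_mul (g x)) (.of_forall (hfgh x))).trans_eq
      (integral_const_mul _ _)
  calc ∫ x, ∫ y, f x y ∂ν ∂μ ≤ ∫ x, g x * ∫ y, h y ∂ν ∂μ :=
        integral_mono_of_nonneg (.of_forall fun x => integral_nonneg (hf x)) (hg.mul_const _)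
          (.of_forall hinner)
    _ = (∫ x, g x ∂μ) * ∫ y, h y ∂ν := integral_mul_const _ _

theorem integral_toSphere_eq_finrank_mul_setIntegral_ball {E : Type*} [NormedAddCommGroup E]
    [NormedSpace ℝ E] [FiniteDimensional ℝ E] [MeasurableSpace E] [BorelSpace E] [Nontrivial E]
    (μ : Measure E) [μ.IsAddHaarMeasure] (g : E → ℝ) :
    ∫ ω, g ω ∂μ.toSphere = finrank ℝ E * ∫ x in ball (0 : E) 1, g (‖x‖⁻¹ • x) ∂μ := by
  let one : Ioi (0 : ℝ) := ⟨1, mem_Ioi.2 one_pos⟩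
  have hpolar := μ.measurePreserving_homeomorphUnitSphereProd.integral_comp
    (Homeomorph.measurableEmbedding _) fun p => g p.1 * (Iio one).indicator 1 p.2
  have hball (x : ({0}ᶜ : Set E)) :
      g (homeomorphUnitSphereProd E x).1 * (Iio one).indicator 1 (homeomorphUnitSphereProd E x).2
        = (ball (0 : E) 1).indicator (fun y => g (‖y‖⁻¹ • y)) x := by
    have hr : (homeomorphUnitSphereProd E x).2 ∈ Iio one ↔ (x : E) ∈ ball (0 : E) 1 := by
      rw [mem_Iio, ← Subtype.coe_lt_coe, homeomorphUnitSphereProd_apply_snd_coe, mem_ball_zero_iff]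
    by_cases hx : (x : E) ∈ ball (0 : E) 1
    · simp [indicator_of_mem hx, indicator_of_mem (hr.2 hx)]
    · simp [indicator_of_notMem hx, indicator_of_notMem (mt hr.1 hx)]
  have hradial : (Measure.volumeIoiPow (finrank ℝ E - 1)).real (Iio one) = (finrank ℝ E : ℝ)⁻¹ := by
    rw [measureReal_def, Measure.volumeIoiPow_apply_Iio]
    simp [one, Nat.cast_pred finrank_pos]
  rw [funext hball, integral_subtype_comap (measurableSet_singleton 0).compl,
    restrict_compl_singleton, integral_indicator measurableSet_ball,
    integral_prod_mul (f := fun ω : sphere (0 : E) 1 => g ω), integral_indicator_one measurableSet_Iio,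
    hradial] at hpolar
  have hd : (finrank ℝ E : ℝ) ≠ 0 := Nat.cast_ne_zero.2 finrank_pos.ne'
  rw [hpolar]
  field_simp

section InnerProductSpace

variable {ι F : Type*} [Fintype ι] [NormedAddCommGroup F] [InnerProductSpace ℝ F]

theorem norm_sub_inner_smul_sq (v v₂ ω : F) (hω : ‖ω‖ = 1) :
    ‖v - ⟪v - v₂, ω⟫ • ω‖ ^ 2 = ‖v‖ ^ 2 - ⟪v, ω⟫ ^ 2 + ⟪v₂, ω⟫ ^ 2 := by
  rw [norm_sub_sq_real, real_inner_smul_right, norm_smul, hω, inner_sub_left, norm_eq_abs,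
    mul_one, sq_abs]
  ring

variable [FiniteDimensional ℝ F] [MeasurableSpace F] [BorelSpace F]

theorem OrthonormalBasis.integral_prod_repr (o : OrthonormalBasis ι ℝ F) (f : ι → ℝ → ℝ) :
    ∫ x, ∏ i, f i (o.repr x i) = ∏ i, ∫ t, f i t := by
  rw [o.measurePreserving_repr.integral_comp o.repr.toHomeomorph.measurableEmbedding
      fun y => ∏ i, f i (y i),
    (PiLp.volume_preserving_ofLp ι).integral_comp (MeasurableEquiv.toLp 2 _).symm.measurableEmbedding
      fun z => ∏ i, f i (z i)]
  exact integral_fintype_prod_eq_prod f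

theorem OrthonormalBasis.integrable_prod_repr (o : OrthonormalBasis ι ℝ F) {f : ι → ℝ → ℝ}
    (hf : ∀ i, Integrable (f i)) : Integrable fun x => ∏ i, f i (o.repr x i) :=
  o.measurePreserving_repr.integrable_comp_emb o.repr.toHomeomorph.measurableEmbedding |>.2 <|
    (PiLp.volume_preserving_ofLp ι).integrable_comp_emb
      (MeasurableEquiv.toLp 2 _).symm.measurableEmbedding |>.2 (Integrable.fintype_prod hf)

theorem integrable_exp_neg_mul_norm_sq {b : ℝ} (hb : 0 < b) :
    Integrable fun x : F => exp (-(b * ‖x‖ ^ 2)) := by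
  have hval := GaussianFourier.integral_rexp_neg_mul_sq_norm (V := F) hb
  simp only [neg_mul] at hval
  exact .of_integral_ne_zero (by rw [hval]; positivity)

theorem integrableOn_ball_exp_neg_mul_sq {b : ℝ} (hb : 0 ≤ b) {g : F → ℝ} (hg : Measurable g) :
    IntegrableOn (fun x => exp (-(b * g x ^ 2))) (ball (0 : F) 1) :=
  .of_bound measure_ball_lt_top (by fun_prop) 1 (.of_forall fun _ => norm_exp_neg_mul_sq_le_one hb _)

theorem setIntegral_ball_exp_neg_mul_inner_sq_le {n : ℕ} (hF : finrank ℝ F = n + 1) {e : F}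
    (he : ‖e‖ = 1) {l : ℝ} (hl : 0 < l) :
    ∫ x in ball (0 : F) 1, exp (-(l * ⟪e, x⟫ ^ 2)) ≤ 2 ^ n * √(π / l) := by
  obtain ⟨o, ho⟩ := Orthonormal.exists_orthonormalBasis_extension_of_card_eq
    (by simpa using hF) (v := fun _ : Fin (n + 1) => e) (s := {0})
    ⟨fun _ => he, fun i j hij => absurd (Subtype.ext (i.2.trans j.2.symm)) hij⟩
  let box : ℝ → ℝ := (Icc (-1) 1).indicator 1
  have hbox : Integrable box :=
    (integrableOn_const (C := (1 : ℝ)) measure_Icc_lt_top.ne).integrable_indicator measurableSet_Icc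
  let f : Fin (n + 1) → ℝ → ℝ := Fin.cons (fun t => exp (-(l * t ^ 2))) fun _ => box
  have hf (i : Fin (n + 1)) : Integrable (f i) := by
    refine Fin.cases ?_ (fun _ => hbox) i
    simpa [f, neg_mul] using integrable_exp_neg_mul_sq hl
  have hP : Integrable fun x => ∏ i, f i (o.repr x i) := o.integrable_prod_repr hf
  have hle : ∀ x ∈ ball (0 : F) 1, exp (-(l * ⟪e, x⟫ ^ 2)) ≤ ∏ i, f i (o.repr x i) := by
    intro x hx
    have hcoord (i : Fin n) : o.repr x i.succ ∈ Icc (-1) 1 := abs_le.1 <|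
      (PiLp.norm_apply_le _ _).trans ((o.repr.norm_map x).trans_lt (mem_ball_zero_iff.1 hx)).le
    have hbox1 : ∏ i : Fin n, f i.succ (o.repr x i.succ) = 1 :=
      Finset.prod_eq_one fun i _ => indicator_of_mem (hcoord i) 1
    rw [Fin.prod_univ_succ, hbox1, mul_one]
    simp [f, o.repr_apply_apply, ho 0 rfl]
  have hint : ∫ t, box t = 2 := by
    rw [integral_indicator_one measurableSet_Icc, volume_real_Icc]; norm_num
  have hgauss : ∫ t, exp (-(l * t ^ 2)) = √(π / l) := by
    simpa [neg_mul] using integral_gaussian l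
  calc ∫ x in ball (0 : F) 1, exp (-(l * ⟪e, x⟫ ^ 2))
      ≤ ∫ x in ball (0 : F) 1, ∏ i, f i (o.repr x i) :=
        setIntegral_mono_on (integrableOn_ball_exp_neg_mul_sq hl.le (by fun_prop)) hP.integrableOn
          measurableSet_ball hle
    _ ≤ ∫ x, ∏ i, f i (o.repr x i) := setIntegral_le_integral hP <| .of_forall fun x =>
        Finset.prod_nonneg fun i _ =>
          Fin.cases (exp_pos _).le (fun _ => indicator_nonneg (by simp) _) i
    _ = 2 ^ n * √(π / l) := by
        rw [o.integral_prod_repr, Fin.prod_univ_succ]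
        simp [f, hint, hgauss, mul_comm]

theorem integral_toSphere_exp_neg_mul_inner_sq_mul_norm_le {n : ℕ} (hF : finrank ℝ F = n + 1)
    {b : ℝ} (hb : 0 < b) (v : F) :
    (∫ ω, exp (-(b * ⟪v, ω⟫ ^ 2)) ∂(volume : Measure F).toSphere) * ‖v‖
      ≤ (n + 1) * (2 ^ n * √(π / b)) := by
  rcases eq_or_ne v 0 with rfl | hv
  · simp only [norm_zero, mul_zero]; positivity
  have : Nontrivial F := Module.nontrivial_of_finrank_pos (by rw [hF]; exact n.succ_pos)
  have hvn : 0 < ‖v‖ := norm_pos_iff.2 hv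
  have hcone : ∀ x ∈ ball (0 : F) 1, exp (-(b * ⟪v, ‖x‖⁻¹ • x⟫ ^ 2))
      ≤ exp (-(b * ‖v‖ ^ 2 * ⟪‖v‖⁻¹ • v, x⟫ ^ 2)) := by
    intro x hx
    have hx1 : ‖x‖ ≤ 1 := (mem_ball_zero_iff.1 hx).le
    have hlhs : b * ‖v‖ ^ 2 * (‖v‖⁻¹ * ⟪v, x⟫) ^ 2 = b * ⟪v, x⟫ ^ 2 := by field_simp
    rw [real_inner_smul_right, real_inner_smul_left, hlhs, exp_le_exp, neg_le_neg_iff]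
    rcases eq_or_ne x 0 with rfl | hx0
    · simp
    have : 1 ≤ (‖x‖⁻¹) ^ 2 := one_le_pow₀ (one_le_inv₀ (norm_pos_iff.2 hx0) |>.2 hx1)
    gcongr b * ?_
    rw [mul_pow]
    exact le_mul_of_one_le_left (sq_nonneg _) this
  have hball := setIntegral_ball_exp_neg_mul_inner_sq_le hF (norm_smul_inv_norm (𝕜 := ℝ) hv)
    (by positivity : 0 < b * ‖v‖ ^ 2)
  have hsqrt : √(π / (b * ‖v‖ ^ 2)) * ‖v‖ = √(π / b) := by
    rw [← div_div, sqrt_div' _ (sq_nonneg _), sqrt_sq hvn.le, div_mul_cancel₀ _ hvn.ne']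
  rw [integral_toSphere_eq_finrank_mul_setIntegral_ball volume fun y => exp (-(b * ⟪v, y⟫ ^ 2)), hF]
  calc ((n + 1 : ℕ) * ∫ x in ball (0 : F) 1, exp (-(b * ⟪v, ‖x‖⁻¹ • x⟫ ^ 2))) * ‖v‖
      ≤ ((n + 1 : ℕ) * (2 ^ n * √(π / (b * ‖v‖ ^ 2)))) * ‖v‖ := by
        gcongr
        exact (setIntegral_mono_on (integrableOn_ball_exp_neg_mul_sq hb.le (by fun_prop))
          (integrableOn_ball_exp_neg_mul_sq (by positivity) (by fun_prop)) measurableSet_ball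
          hcone).trans hball
    _ = (n + 1) * (2 ^ n * √(π / b)) := by push_cast; rw [← hsqrt]; ring

theorem exists_integral_toSphere_exp_neg_mul_inner_sq_mul_one_add_norm_le [Nontrivial F] {b : ℝ}
    (hb : 0 < b) : ∃ C, ∀ v : F,
      (∫ ω, exp (-(b * ⟪v, ω⟫ ^ 2)) ∂(volume : Measure F).toSphere) * (1 + ‖v‖) ≤ C := by
  obtain ⟨n, hn⟩ := Nat.exists_eq_add_one.2 (finrank_pos (R := ℝ) (M := F))
  refine ⟨(volume : Measure F).toSphere.real univ + (n + 1) * (2 ^ n * √(π / b)), fun v => ?_⟩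
  have hbdd : ∫ ω, exp (-(b * ⟪v, ω⟫ ^ 2)) ∂(volume : Measure F).toSphere
      ≤ (volume : Measure F).toSphere.real univ := by
    simpa using (le_norm_self _).trans <| norm_integral_le_of_norm_le_const
      (μ := (volume : Measure F).toSphere) (C := 1)
      (.of_forall fun ω : sphere (0 : F) 1 => norm_exp_neg_mul_sq_le_one hb.le ⟪v, ω⟫)
  rw [mul_one_add]
  exact add_le_add hbdd (integral_toSphere_exp_neg_mul_inner_sq_mul_norm_le hn hb v)

end InnerProductSpace

theorem gain_integrand_le {β : ℝ} (hβ : 0 < β) (v v₂ ω : EuclideanSpace ℝ (Fin 3))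
    (hω : ‖ω‖ = 1) :
    max ⟪v - v₂, ω⟫ 0 * Maxwellian3 β v₂ * exp (β / 4 * ‖v - ⟪v - v₂, ω⟫ • ω‖ ^ 2)
      ≤ exp (-(β / 8 * ‖v₂‖ ^ 2)) * ((β / (2 * π)) ^ ((3 : ℝ) / 2) * (2 * √(8 / β))
        * exp (β / 4 * ‖v‖ ^ 2) * exp (-(β / 8 * ⟪v, ω⟫ ^ 2))) := by
  have hw : |⟪v₂, ω⟫| ≤ ‖v₂‖ := by simpa [hω] using abs_real_inner_le_norm v₂ ω
  have h := max_sub_mul_exp_collision_le (show 0 < β / 4 by positivity) hw (‖v‖ ^ 2) ⟪v, ω⟫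
  rw [show 2 / (β / 4) = 8 / β by field_simp; norm_num, show β / 4 / 2 = β / 8 by ring] at h
  have hM : Maxwellian3 β v₂
      = (β / (2 * π)) ^ ((3 : ℝ) / 2) * exp (-(2 * (β / 4) * ‖v₂‖ ^ 2)) := by
    rw [Maxwellian3]; ring_nf
  set c₀ := (β / (2 * π)) ^ ((3 : ℝ) / 2)
  calc max ⟪v - v₂, ω⟫ 0 * Maxwellian3 β v₂ * exp (β / 4 * ‖v - ⟪v - v₂, ω⟫ • ω‖ ^ 2)
      = c₀ * (max (⟪v, ω⟫ - ⟪v₂, ω⟫) 0 * exp (-(2 * (β / 4) * ‖v₂‖ ^ 2))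
          * exp (β / 4 * (‖v‖ ^ 2 - ⟪v, ω⟫ ^ 2 + ⟪v₂, ω⟫ ^ 2))) := by
        rw [hM, norm_sub_inner_smul_sq v v₂ ω hω, inner_sub_left]; ring
    _ ≤ c₀ * (2 * √(8 / β) * exp (β / 4 * ‖v‖ ^ 2)
          * (exp (-(β / 8 * ⟪v, ω⟫ ^ 2)) * exp (-(β / 8 * ‖v₂‖ ^ 2)))) := by gcongr
    _ = _ := by ring

/-- **Weighted gain estimate** (used in the identification of Hamiltonian solutions,
Proposition 2.8): there is a constant `C = C(β)` such that for every `v ∈ ℝ³`,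
`∫∫ ⟨v − v₂, ω⟩₊ M_β(v₂) e^{(β/4)|v'|²} dω dv₂ ≤ C e^{(β/4)|v|²} / (1 + |v|)`,
where `v' = v − ⟨v − v₂, ω⟩ω`. -/
theorem weighted_gain_estimate (β : ℝ) (hβ : 0 < β) :
    ∃ C : ℝ, ∀ v : EuclideanSpace ℝ (Fin 3),
      (∫ v₂ : EuclideanSpace ℝ (Fin 3),
        ∫ ω : Metric.sphere (0 : EuclideanSpace ℝ (Fin 3)) 1,
          max ⟪v - v₂, (ω : EuclideanSpace ℝ (Fin 3))⟫ 0 * Maxwellian3 β v₂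
            * Real.exp ((β / 4) *
                ‖v - ⟪v - v₂, (ω : EuclideanSpace ℝ (Fin 3))⟫ •
                  (ω : EuclideanSpace ℝ (Fin 3))‖ ^ 2)
        ∂((volume : Measure (EuclideanSpace ℝ (Fin 3))).toSphere))
      ≤ C * Real.exp ((β / 4) * ‖v‖ ^ 2) / (1 + ‖v‖) := by
  have hb : 0 < β / 8 := by positivity
  obtain ⟨C, hC⟩ := exists_integral_toSphere_exp_neg_mul_inner_sq_mul_one_add_norm_le
    (F := EuclideanSpace ℝ (Fin 3)) hb
  set c := (β / (2 * π)) ^ ((3 : ℝ) / 2) * (2 * √(8 / β))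
  set K := ∫ v₂ : EuclideanSpace ℝ (Fin 3), exp (-(β / 8 * ‖v₂‖ ^ 2))
  refine ⟨c * K * C, fun v => ?_⟩
  have hsphere : Integrable (fun ω : sphere (0 : EuclideanSpace ℝ (Fin 3)) 1 =>
      c * exp (β / 4 * ‖v‖ ^ 2) * exp (-(β / 8 * ⟪v, ω⟫ ^ 2))) (volume : Measure _).toSphere :=
    (Integrable.of_bound (by fun_prop) 1 (.of_forall fun ω =>
      norm_exp_neg_mul_sq_le_one hb.le _)).const_mul _
  rw [le_div_iff₀ (by positivity)]
  refine (mul_le_mul_of_nonneg_right (integral_integral_le_of_le_mul (fun v₂ ω => ?_)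
    (fun v₂ ω => ?_) (integrable_exp_neg_mul_norm_sq hb) hsphere) (by positivity)).trans ?_
  · have : 0 ≤ Maxwellian3 β v₂ := by rw [Maxwellian3]; positivity
    positivity
  · exact gain_integrand_le hβ v v₂ ω (mem_sphere_zero_iff_norm.1 ω.prop)
  rw [integral_const_mul]
  set S := ∫ ω, exp (-(β / 8 * ⟪v, ω⟫ ^ 2)) ∂(volume : Measure (EuclideanSpace ℝ (Fin 3))).toSphere
  calc K * (c * exp (β / 4 * ‖v‖ ^ 2) * S) * (1 + ‖v‖)
      = c * K * exp (β / 4 * ‖v‖ ^ 2) * (S * (1 + ‖v‖)) := by ring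
    _ ≤ c * K * exp (β / 4 * ‖v‖ ^ 2) * C := by gcongr; exact hC v
    _ = c * K * C * exp (β / 4 * ‖v‖ ^ 2) := by ring
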